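/- arXiv:1702.02255 — 2 statements merged into one kernel-verified Lean document; each statement's English description precedes it below -/
import Mathlib

section
/- Let K be a field of characteristic not 2 and E an elliptic curve over K. Then E(K) contains a subgroup isomorphic to ℤ/4ℤ ⊕ ℤ/2ℤ if and only if there exists λ ∈ K \ {0, 1, −1} such that E is isomorphic over K to the curve y² = (x+λ²)(x+1)x. -/
/-!
After completing the square, a point `T = (α₃, 0)` of order two and a second one `Q = (α₂, 0)`
split the cubic: `y² = (x - α₁)(x - α₂)(x - α₃)`. If moreover `T = 2P` with `P = (x, y)`, the duplication formula
gives `x(2P) - α₃ = ((x - α₃)² - (α₃ - α₁)(α₃ - α₂))² / (2y)²`, hence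
`y² = (α₃ - α₁)(x - α₂)² = (α₃ - α₂)(x - α₁)²`, so `α₃ - α₁ = b²` and `α₃ - α₂ = a²` are squares.
Moving `T` to the origin and scaling by `a` yields `y² = (x + λ²)(x + 1)x` with `λ = b / a`, and
`λ ∉ {0, 1, -1}` is the nonvanishing of its discriminant. Conversely, on that curve
`P = (λ, λ(λ + 1))` satisfies `2P = (0, 0)`, and `P`, `Q = (-1, 0)` generate `ℤ/4 × ℤ/2`.
Variable changes act on points by injective homomorphisms, which transfers all of this between
isomorphic curves.
-/

/-- The elliptic curve `y² = (x − α₁)(x − α₂)(x − α₃)` as an affine Weierstrass curve. -/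
def cubicCurve {K : Type*} [Field K] (α₁ α₂ α₃ : K) : WeierstrassCurve.Affine K :=
  { a₁ := 0, a₂ := -(α₁ + α₂ + α₃), a₃ := 0,
    a₄ := α₁ * α₂ + α₂ * α₃ + α₃ * α₁, a₆ := -(α₁ * α₂ * α₃) }

lemma exists_injective_zmod4_prod_zmod2_iff {A : Type*} [AddCommGroup A] :
    (∃ φ : ZMod 4 × ZMod 2 →+ A, Function.Injective φ) ↔
      ∃ P Q : A, 4 • P = 0 ∧ 2 • P ≠ 0 ∧ 2 • Q = 0 ∧ Q ≠ 0 ∧ Q ≠ 2 • P := by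
  constructor
  · rintro ⟨φ, hφ⟩
    refine ⟨φ (1, 0), φ (0, 1), ?_, ?_, ?_, ?_, ?_⟩ <;>
      simp only [← map_nsmul, ← map_zero φ, ne_eq, hφ.eq_iff] <;> decide
  · rintro ⟨P, Q, hP, hP2, hQ, hQ0, hQP⟩
    let f₀ : {f : ℤ →+ A // f 4 = 0} := ⟨zmultiplesHom A P, by simpa [← natCast_zsmul] using hP⟩
    let g₀ : {g : ℤ →+ A // g 2 = 0} := ⟨zmultiplesHom A Q, by simpa [← natCast_zsmul] using hQ⟩
    let f := ZMod.lift 4 f₀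
    let g := ZMod.lift 2 g₀
    have hf : ∀ m : ℕ, f m = m • P := fun m ↦ by simpa [f₀] using ZMod.lift_coe 4 f₀ m
    have hg : ∀ m : ℕ, g m = m • Q := fun m ↦ by simpa [g₀] using ZMod.lift_coe 2 g₀ m
    refine ⟨f.coprod g, (injective_iff_map_eq_zero _).mpr ?_⟩
    rintro ⟨a, b⟩ hab
    have ha : ∀ a : ZMod 4, ∃ m < 4, a = (m : ℕ) := by decide
    have hb : ∀ b : ZMod 2, ∃ m < 2, b = (m : ℕ) := by decide
    obtain ⟨m, hm, rfl⟩ := ha a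
    obtain ⟨k, hk, rfl⟩ := hb b
    rw [AddMonoidHom.coprod_apply, hf, hg] at hab
    interval_cases m <;> interval_cases k
    · rfl
    all_goals exfalso; simp only [zero_smul, one_smul, zero_add, add_zero] at hab
    · exact hQ0 hab
    · exact hP2 (by rw [hab, smul_zero])
    · exact hP2 (by linear_combination (norm := module) (2 : ℤ) • hab - hQ)
    · exact hP2 hab
    · exact hQP (by linear_combination (norm := module) hab - hP)
    · exact hP2 (by linear_combination (norm := module) (2 : ℤ) • (hP - hab))
    · exact hP2 (by linear_combination (norm := module) (2 : ℤ) • (hP - hab) + hQ)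

namespace WeierstrassCurve.VariableChange

variable {K : Type*} [Field K] (C : VariableChange K)

/-- `C • W` substitutes `X = u²X' + r`, `Y = u³Y' + su²X' + t`; `mapX`, `mapY` send a
point `(X, Y)` of `W` to the corresponding point `(X', Y')` of `C • W`. -/
def mapX (x : K) : K := C.u⁻¹ ^ 2 * (x - C.r)

def mapY (x y : K) : K := C.u⁻¹ ^ 3 * (y - C.s * (x - C.r) - C.t)

lemma mapX_injective : Function.Injective C.mapX := fun _ _ h ↦
  sub_left_injective (mul_left_cancel₀ (pow_ne_zero 2 C.u⁻¹.ne_zero) h)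

lemma mapY_injective (x : K) : Function.Injective (C.mapY x) := fun _ _ h ↦
  sub_left_injective (sub_left_injective (mul_left_cancel₀ (pow_ne_zero 3 C.u⁻¹.ne_zero) h))

end WeierstrassCurve.VariableChange

namespace WeierstrassCurve.Affine

variable {K : Type*} [Field K] {W : Affine K}

lemma negY_of_isCharNeTwoNF [W.IsCharNeTwoNF] (x y : K) : W.negY x y = -y := by
  rw [negY, a₁_of_isCharNeTwoNF W, a₃_of_isCharNeTwoNF W]
  ring

section VariableChange

open VariableChange

variable (C : VariableChange K) (x y : K)

lemma evalEval_polynomial_variableChange :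
    (C • W).toAffine.polynomial.evalEval (C.mapX x) (C.mapY x y) =
      C.u⁻¹ ^ 6 * W.polynomial.evalEval x y := by
  simp only [evalEval_polynomial, mapX, mapY, variableChange_a₁, variableChange_a₂,
    variableChange_a₃, variableChange_a₄, variableChange_a₆]
  ring

lemma evalEval_polynomialX_variableChange :
    (C • W).toAffine.polynomialX.evalEval (C.mapX x) (C.mapY x y) =
      C.u⁻¹ ^ 4 * (W.polynomialX.evalEval x y + C.s * W.polynomialY.evalEval x y) := by
  simp only [evalEval_polynomialX, evalEval_polynomialY, mapX, mapY, variableChange_a₁,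
    variableChange_a₂, variableChange_a₄]
  ring

lemma evalEval_polynomialY_variableChange :
    (C • W).toAffine.polynomialY.evalEval (C.mapX x) (C.mapY x y) =
      C.u⁻¹ ^ 3 * W.polynomialY.evalEval x y := by
  simp only [evalEval_polynomialY, mapX, mapY, variableChange_a₁, variableChange_a₃]
  ring

variable {C x y}

lemma Equation.variableChange (h : W.Equation x y) :
    (C • W).toAffine.Equation (C.mapX x) (C.mapY x y) := by
  rw [Equation] at h ⊢
  rw [evalEval_polynomial_variableChange, h, mul_zero]

lemma Nonsingular.variableChange (h : W.Nonsingular x y) :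
    (C • W).toAffine.Nonsingular (C.mapX x) (C.mapY x y) := by
  refine ⟨h.1.variableChange, ?_⟩
  rw [evalEval_polynomialX_variableChange, evalEval_polynomialY_variableChange]
  by_cases hY : W.polynomialY.evalEval x y = 0
  · simpa [hY, C.u⁻¹.ne_zero] using h.2
  · exact .inr (mul_ne_zero (pow_ne_zero 3 C.u⁻¹.ne_zero) hY)

variable (C)

lemma negY_variableChange :
    (C • W).toAffine.negY (C.mapX x) (C.mapY x y) = C.mapY x (W.negY x y) := by
  simp only [negY, mapX, mapY, variableChange_a₁, variableChange_a₃]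
  ring

lemma addX_variableChange (x₁ x₂ ℓ : K) :
    (C • W).toAffine.addX (C.mapX x₁) (C.mapX x₂) (C.u⁻¹ * (ℓ - C.s)) =
      C.mapX (W.addX x₁ x₂ ℓ) := by
  simp only [addX, mapX, variableChange_a₁, variableChange_a₂]
  ring

lemma addY_variableChange (x₁ x₂ y₁ ℓ : K) :
    (C • W).toAffine.addY (C.mapX x₁) (C.mapX x₂) (C.mapY x₁ y₁) (C.u⁻¹ * (ℓ - C.s)) =
      C.mapY (W.addX x₁ x₂ ℓ) (W.addY x₁ x₂ y₁ ℓ) := by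
  simp only [addY, negAddY, addX, negY, mapX, mapY, variableChange_a₁, variableChange_a₂,
    variableChange_a₃]
  ring

variable [DecidableEq K]

lemma slope_variableChange {x₁ x₂ y₁ y₂ : K} (h₁ : W.Equation x₁ y₁) (h₂ : W.Equation x₂ y₂)
    (hxy : ¬(x₁ = x₂ ∧ y₁ = W.negY x₂ y₂)) :
    (C • W).toAffine.slope (C.mapX x₁) (C.mapX x₂) (C.mapY x₁ y₁) (C.mapY x₂ y₂) =
      C.u⁻¹ * (W.slope x₁ x₂ y₁ y₂ - C.s) := by
  by_cases hx : x₁ = x₂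
  · have hy : y₁ ≠ W.negY x₂ y₂ := fun hy ↦ hxy ⟨hx, hy⟩
    obtain rfl := hx
    obtain rfl := Y_eq_of_Y_ne h₁ h₂ rfl hy
    have hy' : C.mapY x₁ y₁ ≠ (C • W).toAffine.negY (C.mapX x₁) (C.mapY x₁ y₁) := by
      rw [negY_variableChange]; exact (C.mapY_injective x₁).ne hy
    have hY : W.polynomialY.evalEval x₁ y₁ ≠ 0 := by
      rw [negY] at hy
      rw [evalEval_polynomialY]
      contrapose! hy
      linear_combination hy
    rw [slope_of_Y_ne_eq_evalEval rfl hy', slope_of_Y_ne_eq_evalEval rfl hy,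
      evalEval_polynomialX_variableChange, evalEval_polynomialY_variableChange]
    field_simp
    ring
  · have hx' : C.mapX x₁ ≠ C.mapX x₂ := C.mapX_injective.ne hx
    rw [slope_of_X_ne hx', slope_of_X_ne hx, div_eq_iff (sub_ne_zero.mpr hx')]
    have hd : x₁ - x₂ ≠ 0 := sub_ne_zero.mpr hx
    simp only [mapX, mapY]
    field_simp
    ring

namespace Point

def variableChange : W.Point →+ (C • W).toAffine.Point where
  toFun P := match P with
    | 0 => 0
    | some _ _ h => some _ _ h.variableChange
  map_zero' := rfl
  map_add' := by
    rintro (_ | ⟨x₁, y₁, h₁⟩) (_ | ⟨x₂, y₂, h₂⟩)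
    any_goals rfl
    by_cases hxy : x₁ = x₂ ∧ y₁ = W.negY x₂ y₂
    · obtain ⟨rfl, rfl⟩ := hxy
      rw [add_of_Y_eq rfl rfl, add_of_Y_eq rfl (negY_variableChange C).symm]
    · have hxy' : ¬(C.mapX x₁ = C.mapX x₂ ∧
          C.mapY x₁ y₁ = (C • W).toAffine.negY (C.mapX x₂) (C.mapY x₂ y₂)) := by
        rintro ⟨hx, hy⟩
        obtain rfl := C.mapX_injective hx
        exact hxy ⟨rfl, C.mapY_injective x₁ (hy.trans (negY_variableChange C))⟩
      simp only [add_some hxy, add_some hxy', slope_variableChange C h₁.1 h₂.1 hxy,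
        addX_variableChange, addY_variableChange]

lemma variableChange_injective : Function.Injective (variableChange C (W := W)) := by
  rintro (_ | _) (_ | _) h
  any_goals contradiction
  · rfl
  · obtain ⟨hx, hy⟩ := some.inj h
    obtain rfl := C.mapX_injective hx
    obtain rfl := C.mapY_injective _ hy
    rfl

end Point

lemma exists_injective_iff_variableChange {G : Type*} [AddGroup G] :
    (∃ φ : G →+ W.Point, Function.Injective φ) ↔
      ∃ φ : G →+ (C • W).toAffine.Point, Function.Injective φ := by
  refine ⟨fun ⟨φ, hφ⟩ ↦
    ⟨(Point.variableChange C).comp φ, (Point.variableChange_injective C).comp hφ⟩, fun h ↦ ?_⟩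
  obtain ⟨W', rfl⟩ : ∃ W' : Affine K, W = C⁻¹ • W' := ⟨C • W, (inv_smul_smul C W).symm⟩
  rw [smul_inv_smul] at h
  obtain ⟨φ, hφ⟩ := h
  exact ⟨(Point.variableChange C⁻¹).comp φ, (Point.variableChange_injective C⁻¹).comp hφ⟩

end VariableChange

variable [DecidableEq K]

lemma Point.two_nsmul_some_eq_zero_iff [W.IsCharNeTwoNF] (h2 : (2 : K) ≠ 0) {x y : K}
    (h : W.Nonsingular x y) : 2 • some x y h = 0 ↔ y = 0 := by
  have hy : y = W.negY x y ↔ y = 0 := by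
    rw [negY_of_isCharNeTwoNF, eq_neg_iff_add_eq_zero, ← two_mul, mul_eq_zero, or_iff_right h2]
  rw [two_nsmul, ← hy]
  refine ⟨fun hP ↦ ?_, Point.add_self_of_Y_eq⟩
  by_contra hne
  exact Point.some_ne_zero _ ((Point.add_self_of_Y_ne hne).symm.trans hP)

end WeierstrassCurve.Affine

open WeierstrassCurve Affine

section cubicCurve

variable {K : Type*} [Field K]

instance (α₁ α₂ α₃ : K) : (cubicCurve α₁ α₂ α₃).IsCharNeTwoNF := ⟨rfl, rfl⟩

lemma cubicCurve_Δ (α₁ α₂ α₃ : K) :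
    (cubicCurve α₁ α₂ α₃).Δ = 16 * ((α₁ - α₂) * (α₂ - α₃) * (α₃ - α₁)) ^ 2 := by
  simp only [cubicCurve, Δ, b₂, b₄, b₆, b₈]
  ring

lemma cubicCurve_equation_iff {α₁ α₂ α₃ x y : K} :
    (cubicCurve α₁ α₂ α₃).Equation x y ↔ y ^ 2 = (x - α₁) * (x - α₂) * (x - α₃) := by
  rw [equation_iff]
  simp only [cubicCurve]
  constructor <;> intro h <;> linear_combination h

lemma variableChange_cubicCurve (u : Kˣ) (r α₁ α₂ α₃ : K) :
    (⟨u, r, 0, 0⟩ : VariableChange K) • cubicCurve α₁ α₂ α₃ =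
      cubicCurve (u⁻¹ ^ 2 * (α₁ - r)) (u⁻¹ ^ 2 * (α₂ - r)) (u⁻¹ ^ 2 * (α₃ - r)) := by
  ext <;> simp only [variableChange_a₁, variableChange_a₂, variableChange_a₃, variableChange_a₄,
    variableChange_a₆, cubicCurve] <;> ring

lemma cubicCurve_Δ_ne_zero_iff {lam : K} (h2 : (2 : K) ≠ 0) :
    (cubicCurve (-(lam ^ 2)) (-1) 0).Δ ≠ 0 ↔ lam ≠ 0 ∧ lam ≠ 1 ∧ lam ≠ -1 := by
  have hΔ : (cubicCurve (-(lam ^ 2)) (-1) 0).Δ = 2 ^ 4 * (lam ^ 2 * (lam - 1) * (lam + 1)) ^ 2 := by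
    rw [cubicCurve_Δ]; ring
  rw [hΔ]
  simp [h2, sub_eq_zero, add_eq_zero_iff_eq_neg, and_assoc]

lemma exists_eq_cubicCurve_of_equation {W : Affine K} [W.IsCharNeTwoNF] {x₁ x₂ : K}
    (h₁ : W.Equation x₁ 0) (h₂ : W.Equation x₂ 0) (hx : x₁ ≠ x₂) :
    ∃ α : K, W = cubicCurve α x₂ x₁ := by
  rw [equation_iff, a₁_of_isCharNeTwoNF W, a₃_of_isCharNeTwoNF W] at h₁ h₂
  have ha₄ : W.a₄ = -(x₁ ^ 2 + x₁ * x₂ + x₂ ^ 2) - W.a₂ * (x₁ + x₂) := by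
    refine mul_left_cancel₀ (sub_ne_zero.mpr hx) ?_
    linear_combination h₂ - h₁
  refine ⟨-W.a₂ - x₁ - x₂, ?_⟩
  ext
  · exact a₁_of_isCharNeTwoNF W
  · simp only [cubicCurve]; ring
  · exact a₃_of_isCharNeTwoNF W
  · simp only [cubicCurve]; linear_combination ha₄
  · simp only [cubicCurve]; linear_combination -h₁ - x₁ * ha₄

lemma exists_variableChange_cubicCurve_eq_of_isSquare {α₁ α₂ α₃ : K} (h₁ : IsSquare (α₃ - α₁))
    (h₂ : IsSquare (α₃ - α₂)) (h₂₃ : α₂ ≠ α₃) :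
    ∃ lam : K, ∃ C : VariableChange K,
      C • cubicCurve α₁ α₂ α₃ = cubicCurve (-(lam ^ 2)) (-1) 0 := by
  obtain ⟨b, hb⟩ := h₁
  obtain ⟨a, ha⟩ := h₂
  have ha0 : a ≠ 0 := by rintro rfl; exact h₂₃ (by linear_combination -ha)
  refine ⟨b / a, ⟨Units.mk0 a ha0, α₃, 0, 0⟩, ?_⟩
  rw [variableChange_cubicCurve]
  simp only [Units.val_inv_eq_inv_val, Units.val_mk0]
  congr 1 <;> field_simp
  · linear_combination -hb
  · linear_combination -ha
  · ring

variable [DecidableEq K]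

lemma isSquare_sub_of_two_nsmul_eq {α₁ α₂ α₃ : K} {h₃ : (cubicCurve α₁ α₂ α₃).Nonsingular α₃ 0}
    {P : (cubicCurve α₁ α₂ α₃).Point} (hP : 2 • P = .some α₃ 0 h₃) :
    IsSquare (α₃ - α₁) ∧ IsSquare (α₃ - α₂) := by
  rcases P with _ | ⟨x, y, h⟩
  · exact absurd hP.symm (Point.some_ne_zero h₃)
  rw [two_nsmul] at hP
  have hy : y ≠ (cubicCurve α₁ α₂ α₃).negY x y := fun hy ↦
    Point.some_ne_zero h₃ ((Point.add_self_of_Y_eq hy).symm.trans hP).symm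
  rw [Point.add_self_of_Y_ne hy] at hP
  have hX := (Point.some.inj hP).1
  have hL : (cubicCurve α₁ α₂ α₃).slope x x y y * (2 * y) =
      3 * x ^ 2 - 2 * (α₁ + α₂ + α₃) * x + (α₁ * α₂ + α₂ * α₃ + α₃ * α₁) := by
    have h2y : y - (cubicCurve α₁ α₂ α₃).negY x y = 2 * y := by rw [negY_of_isCharNeTwoNF]; ring
    rw [slope_of_Y_ne rfl hy, ← h2y, div_mul_cancel₀ _ (sub_ne_zero.mpr hy)]
    simp only [cubicCurve]
    ring
  set L := (cubicCurve α₁ α₂ α₃).slope x x y y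
  rw [negY_of_isCharNeTwoNF] at hy
  have hy0 : y ≠ 0 := by rintro rfl; simp at hy
  have hE := cubicCurve_equation_iff.mp h.1
  simp only [addX, cubicCurve] at hX
  have hd : (x - α₃) ^ 2 = (α₃ - α₁) * (α₃ - α₂) := by
    refine sub_eq_zero.mp (pow_eq_zero_iff two_ne_zero |>.mp ?_)
    linear_combination (-(3 * x ^ 2 - 2 * (α₁ + α₂ + α₃) * x + (α₁ * α₂ + α₂ * α₃ + α₃ * α₁)
      + 2 * y * L)) * hL + 4 * y ^ 2 * hX + 4 * (2 * x - α₁ - α₂) * hE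
  have isSquare_of_eq : ∀ {a z : K}, y ^ 2 = a * z ^ 2 → IsSquare a := fun {a z} hyz ↦ by
    have hz : z ≠ 0 := by
      rintro rfl
      exact hy0 (pow_eq_zero_iff two_ne_zero |>.mp (by simpa using hyz))
    exact ⟨y / z, by field_simp; linear_combination -hyz⟩
  exact ⟨isSquare_of_eq (z := x - α₂) (by linear_combination hE + (x - α₂) * hd),
    isSquare_of_eq (z := x - α₁) (by linear_combination hE + (x - α₁) * hd)⟩

lemma exists_variableChange_eq_cubicCurve {W : Affine K} [W.IsCharNeTwoNF] (h2 : (2 : K) ≠ 0)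
    (hW : ∃ φ : ZMod 4 × ZMod 2 →+ W.Point, Function.Injective φ) :
    ∃ lam : K, ∃ C : VariableChange K, C • W = cubicCurve (-(lam ^ 2)) (-1) 0 := by
  obtain ⟨P, Q, hP, hP2, hQ, hQ0, hQP⟩ := exists_injective_zmod4_prod_zmod2_iff.mp hW
  obtain ⟨x₀, y₀, h₀, hT⟩ : ∃ x₀ y₀ h₀, 2 • P = .some x₀ y₀ h₀ := by
    rcases hT : 2 • P with _ | ⟨x₀, y₀, h₀⟩
    exacts [absurd hT hP2, ⟨_, _, _, rfl⟩]
  obtain ⟨x₁, y₁, h₁, rfl⟩ : ∃ x₁ y₁ h₁, Q = .some x₁ y₁ h₁ := by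
    rcases Q with _ | ⟨x₁, y₁, h₁⟩
    exacts [absurd rfl hQ0, ⟨_, _, _, rfl⟩]
  obtain rfl : y₀ = 0 := by
    rw [← Point.two_nsmul_some_eq_zero_iff h2 h₀, ← hT, smul_smul]
    exact hP
  obtain rfl : y₁ = 0 := (Point.two_nsmul_some_eq_zero_iff h2 h₁).mp hQ
  have hx : x₀ ≠ x₁ := by
    rintro rfl
    exact hQP hT.symm
  obtain ⟨α, rfl⟩ := exists_eq_cubicCurve_of_equation h₀.1 h₁.1 hx
  obtain ⟨hsq₁, hsq₂⟩ := isSquare_sub_of_two_nsmul_eq hT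
  exact exists_variableChange_cubicCurve_eq_of_isSquare hsq₁ hsq₂ hx.symm

lemma exists_injective_cubicCurve (h2 : (2 : K) ≠ 0) {lam : K}
    (hlam : lam ≠ 0 ∧ lam ≠ 1 ∧ lam ≠ -1) :
    ∃ φ : ZMod 4 × ZMod 2 →+ (cubicCurve (-(lam ^ 2)) (-1) 0).Point, Function.Injective φ := by
  have hΔ := (cubicCurve_Δ_ne_zero_iff h2).mpr hlam
  have nonsingular {x y : K} (h : y ^ 2 = (x + lam ^ 2) * (x + 1) * x) :
      (cubicCurve (-(lam ^ 2)) (-1) 0).Nonsingular x y :=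
    (equation_iff_nonsingular_of_Δ_ne_zero hΔ).mp
      (cubicCurve_equation_iff.mpr (by linear_combination h))
  have hP := nonsingular (x := lam) (y := lam * (lam + 1)) (by ring)
  have hT := nonsingular (x := 0) (y := 0) (by ring)
  have hQ := nonsingular (x := -1) (y := 0) (by ring)
  have hy : lam * (lam + 1) ≠ (cubicCurve (-(lam ^ 2)) (-1) 0).negY lam (lam * (lam + 1)) := by
    rw [negY_of_isCharNeTwoNF, ne_eq, eq_neg_iff_add_eq_zero, ← two_mul]
    exact mul_ne_zero h2 (mul_ne_zero hlam.1 fun h ↦ hlam.2.2 (eq_neg_of_add_eq_zero_left h))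
  have h2P : 2 • Point.some _ _ hP = .some _ _ hT := by
    rw [two_nsmul, Point.add_self_of_Y_ne hy]
    have hL : (cubicCurve (-(lam ^ 2)) (-1) 0).slope lam lam (lam * (lam + 1)) (lam * (lam + 1))
        = lam + 1 := by
      rw [slope_of_Y_ne rfl hy, div_eq_iff (sub_ne_zero.mpr hy), negY_of_isCharNeTwoNF]
      simp only [cubicCurve]
      ring
    rw [Point.some.injEq, hL]
    simp only [addY, negAddY, addX, negY, cubicCurve]
    constructor <;> ring
  refine exists_injective_zmod4_prod_zmod2_iff.mpr
    ⟨.some _ _ hP, .some _ _ hQ, ?_, ?_, ?_, Point.some_ne_zero hQ, ?_⟩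
  · rw [show 4 = 2 * 2 from rfl, mul_nsmul, h2P, Point.two_nsmul_some_eq_zero_iff h2]
  · rw [h2P]
    exact Point.some_ne_zero hT
  · rw [Point.two_nsmul_some_eq_zero_iff h2]
  · rw [h2P, ne_eq, Point.some.injEq]
    exact fun h ↦ one_ne_zero (neg_eq_zero.mp h.1)

end cubicCurve

open Classical in
theorem subgroup_Z4_Z2_iff {K : Type*} [Field K] (h2 : (2 : K) ≠ 0)
    (W : WeierstrassCurve.Affine K) (hW : W.Δ ≠ 0) :
    (∃ φ : (ZMod 4 × ZMod 2) →+ W.Point, Function.Injective φ) ↔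
      ∃ lam : K, lam ≠ 0 ∧ lam ≠ 1 ∧ lam ≠ -1 ∧
        ∃ C : WeierstrassCurve.VariableChange K,
          C • W = cubicCurve (-(lam ^ 2)) (-1) 0 := by
  constructor
  · intro h
    let := invertibleOfNonzero h2
    obtain ⟨lam, C, hC⟩ := exists_variableChange_eq_cubicCurve h2
      ((exists_injective_iff_variableChange W.toCharNeTwoNF).mp h)
    have hΔ : (cubicCurve (-(lam ^ 2)) (-1) 0).Δ ≠ 0 := by
      rw [← hC, ← mul_smul, variableChange_Δ]
      exact mul_ne_zero (pow_ne_zero _ (Units.ne_zero _)) hW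
    obtain ⟨h0, h1, hm1⟩ := (cubicCurve_Δ_ne_zero_iff h2).mp hΔ
    exact ⟨lam, h0, h1, hm1, C * W.toCharNeTwoNF, by rw [mul_smul, hC]⟩
  · rintro ⟨lam, h0, h1, hm1, C, hC⟩
    refine (exists_injective_iff_variableChange C).mpr ?_
    rw [hC]
    exact exists_injective_cubicCurve h2 ⟨h0, h1, hm1⟩
end

section
/- Let K be a field of characteristic not 2 and c ∈ K \ {0, ±1, ±1±√2, ±√−1}. Set λ = ((c−1/c)/2)² and let E: y² = (x+λ²)(x+1)x. Then the point R = ((1−c)³(c+1)/(4c), −(c²−1/c²)((c−2)²−1/c²)c/16) lies on E(K) and has order 8; moreover E(K) contains a subgroup isomorphic to ℤ/8ℤ ⊕ ℤ/2ℤ. -/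
/-- `c` avoids the exceptional set `{0, ±1, ±1±√2, ±√−1}`: equivalently `c ≠ 0`, `c ≠ ±1`,
`((c−1/c)/2)² ≠ 1` and `((c−1/c)/2)² ≠ −1`. -/
def GoodParam {K : Type*} [Field K] (c : K) : Prop :=
  c ≠ 0 ∧ c ≠ 1 ∧ c ≠ -1 ∧ ((c - 1 / c) / 2) ^ 2 ≠ 1 ∧ ((c - 1 / c) / 2) ^ 2 ≠ -1

/-
Doubling `R` along its tangent gives `Q = (λ, λ(λ + 1))`, and doubling `Q` along its tangent
(of slope `λ + 1`) gives the `2`-torsion point `(0, 0)`. Hence `4R = (0, 0) ≠ O`, so `R` has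
order `8`. The other `2`-torsion point `(-1, 0)` differs from `4R`, the only point of order `2`
in `⟨R⟩`, so it splits off a second factor `ℤ/2ℤ`.
-/

open WeierstrassCurve.Affine

theorem exists_zmod_prod_zmod_two_injective {M : Type*} [AddCommGroup M] {n : ℕ} {P T : M}
    (hP : addOrderOf P = 2 * n) (hT : 2 • T = 0) (hT0 : T ≠ 0) (hTP : T ≠ n • P) :
    ∃ φ : ZMod (2 * n) × ZMod 2 →+ M, Function.Injective φ := by
  have hT' : (2 : ℤ) • T = 0 := by simpa [← natCast_zsmul] using hT
  let f : ZMod (2 * n) →+ M :=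
    ZMod.lift _ ⟨zmultiplesHom M P, by simp [← hP, addOrderOf_nsmul_eq_zero]⟩
  let g : ZMod 2 →+ M := ZMod.lift _ ⟨zmultiplesHom M T, hT'⟩
  refine ⟨f.coprod g, (injective_iff_map_eq_zero _).2 ?_⟩
  rintro ⟨a, b⟩ h
  obtain ⟨k, rfl⟩ := ZMod.intCast_surjective a
  obtain rfl | rfl := (by decide : ∀ b : ZMod 2, b = 0 ∨ b = 1) b
  · simp only [AddMonoidHom.coprod_apply, map_zero, add_zero, f, ZMod.lift_coe,
      zmultiplesHom_apply] at h
    simpa [ZMod.intCast_zmod_eq_zero_iff_dvd, ← hP, addOrderOf_dvd_iff_zsmul_eq_zero] using h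
  · have hg : g 1 = T := by simpa using ZMod.lift_coe 2 ⟨zmultiplesHom M T, _⟩ 1
    simp only [AddMonoidHom.coprod_apply, f, ZMod.lift_coe, zmultiplesHom_apply, hg] at h
    have hkT : k • P = T := by linear_combination (norm := module) h - hT'
    -- `k • P` has order at most `2`, so `k = n * m`, and the parity of `m` makes `T` either
    -- `0` or `n • P`.
    obtain ⟨m, rfl⟩ : (n : ℤ) ∣ k := by
      have : ((2 * n : ℕ) : ℤ) ∣ 2 * k := by
        rw [← hP, addOrderOf_dvd_iff_zsmul_eq_zero, mul_zsmul, hkT, hT']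
      push_cast at this
      exact (mul_dvd_mul_iff_left two_ne_zero).1 this
    have h2nP : (2 * n : ℤ) • P = 0 := by
      exact_mod_cast (hP ▸ addOrderOf_nsmul_eq_zero P : (2 * n) • P = 0)
    rcases Int.even_or_odd' m with ⟨i, rfl | rfl⟩
    · exact absurd (by linear_combination (norm := module) -hkT + i • h2nP) hT0
    · exact absurd (by linear_combination (norm := module) -hkT + i • h2nP) hTP

section cubicCurve

variable {K : Type*} [Field K] {α₁ α₂ α₃ x y : K}

lemma cubicCurve_negY : (cubicCurve α₁ α₂ α₃).negY x y = -y := by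
  simp [negY, cubicCurve]

lemma cubicCurve_nonsingular_iff (h2 : (2 : K) ≠ 0) :
    (cubicCurve α₁ α₂ α₃).Nonsingular x y ↔ y ^ 2 = (x - α₁) * (x - α₂) * (x - α₃) ∧
      (y ≠ 0 ∨ (x - α₂) * (x - α₃) + (x - α₁) * (x - α₃) + (x - α₁) * (x - α₂) ≠ 0) := by
  rw [WeierstrassCurve.Affine.nonsingular_iff, equation_iff]
  simp only [cubicCurve]
  refine and_congr ⟨fun h => by linear_combination h, fun h => by linear_combination h⟩
    (or_comm.trans (or_congr (not_congr ⟨fun h => ?_, fun h => by rw [h]; ring⟩)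
      (not_congr ⟨fun h => by linear_combination -h, fun h => by linear_combination -h⟩)))
  exact (mul_eq_zero.1 (by linear_combination h : 2 * y = 0)).resolve_left h2

variable [DecidableEq K]

lemma cubicCurve_two_nsmul_some_of_Y_eq_zero (h : (cubicCurve α₁ α₂ α₃).Nonsingular x 0) :
    2 • Point.some _ _ h = 0 := by
  rw [two_nsmul]
  exact Point.add_self_of_Y_eq (by rw [cubicCurve_negY, neg_zero])

lemma cubicCurve_two_nsmul_some_of_tangent (h2 : (2 : K) ≠ 0) {x' y' s : K}
    (h : (cubicCurve α₁ α₂ α₃).Nonsingular x y) (h' : (cubicCurve α₁ α₂ α₃).Nonsingular x' y')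
    (hy : y ≠ 0)
    (hs : 2 * y * s = (x - α₂) * (x - α₃) + (x - α₁) * (x - α₃) + (x - α₁) * (x - α₂))
    (hx' : x' = s ^ 2 + α₁ + α₂ + α₃ - 2 * x) (hy' : y' = s * (x - x') - y) :
    2 • Point.some _ _ h = Point.some _ _ h' := by
  have hyy : y ≠ -y :=
    fun h => hy ((mul_eq_zero.1 (by linear_combination h : 2 * y = 0)).resolve_left h2)
  have hy2 : y ≠ (cubicCurve α₁ α₂ α₃).negY x y := by rwa [cubicCurve_negY]
  have hslope : (cubicCurve α₁ α₂ α₃).slope x x y y = s := by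
    rw [slope_of_Y_ne rfl hy2, cubicCurve_negY, div_eq_iff (sub_ne_zero.2 hyy)]
    simp only [cubicCurve]
    linear_combination -hs
  rw [two_nsmul, Point.add_self_of_Y_ne hy2, Point.some.injEq, hslope]
  subst hy' hx'
  rw [addY, cubicCurve_negY]
  simp only [negAddY, addX, cubicCurve]
  constructor <;> ring

lemma two_nsmul_some_ell (h2 : (2 : K) ≠ 0) {ℓ : K} (hℓ : ℓ * (ℓ + 1) ≠ 0)
    (hQ : (cubicCurve (-(ℓ ^ 2)) (-1) 0).Nonsingular ℓ (ℓ * (ℓ + 1)))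
    (hP : (cubicCurve (-(ℓ ^ 2)) (-1) 0).Nonsingular 0 0) :
    2 • Point.some _ _ hQ = Point.some _ _ hP :=
  cubicCurve_two_nsmul_some_of_tangent h2 hQ hP hℓ (s := ℓ + 1) (by ring) (by ring) (by ring)

end cubicCurve

section pointR

variable {K : Type*} [Field K] {c : K}

abbrev lam (c : K) : K := ((c - 1 / c) / 2) ^ 2

abbrev pointRX (c : K) : K := (1 - c) ^ 3 * (c + 1) / (4 * c)

abbrev pointRY (c : K) : K := -((c ^ 2 - 1 / c ^ 2) * ((c - 2) ^ 2 - 1 / c ^ 2) * c / 16)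

lemma GoodParam.lam_ne_zero (h2 : (2 : K) ≠ 0) (hc : GoodParam c) : lam c ≠ 0 := by
  obtain ⟨hc0, hc1, hcm1, -, -⟩ := hc
  refine pow_ne_zero 2 (div_ne_zero (sub_ne_zero.2 fun h => ?_) h2)
  have hcc : c * c = 1 := by nth_rewrite 2 [h]; exact mul_one_div_cancel hc0
  exact (mul_self_eq_one_iff.1 hcc).elim hc1 hcm1

lemma GoodParam.pointRY_ne_zero (h2 : (2 : K) ≠ 0) (hc : GoodParam c) : pointRY c ≠ 0 := by
  have hℓ0 := hc.lam_ne_zero h2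
  obtain ⟨hc0, hc1, -, hℓ1, hℓm1⟩ := hc
  have h4 : (4 : K) ≠ 0 := by have := mul_ne_zero h2 h2; norm_num at this; exact this
  have h16 : (16 : K) ≠ 0 := by have := mul_ne_zero h4 h4; norm_num at this; exact this
  have hinv : c * (1 / c) = 1 := mul_one_div_cancel hc0
  have hfac : pointRY c =
      -((c - 1 / c) / 2 * (c + 1 / c) * ((c - 1 / c) / 2 - 1) * (c - 1) ^ 2 / 4) := by
    rw [pointRY]
    field_simp
    ring
  rw [hfac]
  -- The four factors vanish on `c = ±1`, `c = ±√−1`, `c = 1 ± √2` and `c = 1` respectively.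
  refine neg_ne_zero.2 (div_ne_zero (mul_ne_zero (mul_ne_zero (mul_ne_zero ?_ ?_) ?_) ?_) h4)
  · exact fun h => hℓ0 (by rw [lam, h, sq, zero_mul])
  · refine fun h => hℓm1 ?_
    rw [div_pow, div_eq_iff (pow_ne_zero 2 h2)]
    linear_combination (c + 1 / c) * h - 4 * hinv
  · exact fun h => hℓ1 (by rw [sub_eq_zero.1 h, one_pow])
  · exact pow_ne_zero 2 (sub_ne_zero.2 hc1)

lemma GoodParam.nonsingular_pointR (h2 : (2 : K) ≠ 0) (hc : GoodParam c) :
    (cubicCurve (-(lam c ^ 2)) (-1) 0).Nonsingular (pointRX c) (pointRY c) := by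
  refine (cubicCurve_nonsingular_iff h2).2 ⟨?_, Or.inl (hc.pointRY_ne_zero h2)⟩
  have hc0 : c ≠ 0 := hc.1
  have h4 : (4 : K) ≠ 0 := by have := mul_ne_zero h2 h2; norm_num at this; exact this
  have h16 : (16 : K) ≠ 0 := by have := mul_ne_zero h4 h4; norm_num at this; exact this
  rw [pointRX, pointRY, lam]
  field_simp
  ring

variable [DecidableEq K]

lemma GoodParam.two_nsmul_some_pointR (h2 : (2 : K) ≠ 0) (hc : GoodParam c)
    (hR : (cubicCurve (-(lam c ^ 2)) (-1) 0).Nonsingular (pointRX c) (pointRY c))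
    (hQ : (cubicCurve (-(lam c ^ 2)) (-1) 0).Nonsingular (lam c) (lam c * (lam c + 1))) :
    2 • Point.some _ _ hR = Point.some _ _ hQ := by
  have h4 : (4 : K) ≠ 0 := by have := mul_ne_zero h2 h2; norm_num at this; exact this
  have h16 : (16 : K) ≠ 0 := by have := mul_ne_zero h4 h4; norm_num at this; exact this
  have hc0 : c ≠ 0 := hc.1
  refine cubicCurve_two_nsmul_some_of_tangent h2 hR hQ (hc.pointRY_ne_zero h2)
    (s := (c ^ 4 - 4 * c ^ 3 - 1) / (4 * c ^ 2)) ?_ ?_ ?_ <;>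
  · simp only [pointRX, pointRY, lam]
    field_simp
    ring

end pointR

open Classical in
theorem order_eight_point {K : Type*} [Field K] (h2 : (2 : K) ≠ 0)
    (c : K) (hc : GoodParam c) :
    ∃ hR : (cubicCurve (-((((c - 1 / c) / 2) ^ 2) ^ 2)) (-1) 0).Nonsingular
        ((1 - c) ^ 3 * (c + 1) / (4 * c))
        (-((c ^ 2 - 1 / c ^ 2) * ((c - 2) ^ 2 - 1 / c ^ 2) * c / 16)),
      addOrderOf (WeierstrassCurve.Affine.Point.some _ _ hR) = 8 ∧
      ∃ φ : (ZMod 8 × ZMod 2) →+ (cubicCurve (-((((c - 1 / c) / 2) ^ 2) ^ 2)) (-1) 0).Point,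
        Function.Injective φ := by
  have hℓ0 : lam c ≠ 0 := hc.lam_ne_zero h2
  have hℓ1 : lam c ≠ 1 := hc.2.2.2.1
  have hℓm1 : lam c + 1 ≠ 0 := fun h => hc.2.2.2.2 (eq_neg_of_add_eq_zero_left h)
  have hR := hc.nonsingular_pointR h2
  have hQ : (cubicCurve (-(lam c ^ 2)) (-1) 0).Nonsingular (lam c) (lam c * (lam c + 1)) :=
    (cubicCurve_nonsingular_iff h2).2 ⟨by ring, Or.inl (mul_ne_zero hℓ0 hℓm1)⟩
  have hP : (cubicCurve (-(lam c ^ 2)) (-1) 0).Nonsingular 0 0 :=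
    (cubicCurve_nonsingular_iff h2).2 ⟨by ring, Or.inr (by simpa using hℓ0)⟩
  have hT : (cubicCurve (-(lam c ^ 2)) (-1) 0).Nonsingular (-1) 0 :=
    (cubicCurve_nonsingular_iff h2).2 ⟨by ring, Or.inr fun h =>
      mul_ne_zero (sub_ne_zero.2 hℓ1) hℓm1 (by linear_combination -h)⟩
  have h4R : 4 • Point.some _ _ hR = Point.some _ _ hP := by
    rw [show 4 = 2 * 2 from rfl, mul_nsmul, hc.two_nsmul_some_pointR h2 hR hQ,
      two_nsmul_some_ell h2 (mul_ne_zero hℓ0 hℓm1) hQ hP]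
  have horder : addOrderOf (Point.some _ _ hR) = 8 :=
    addOrderOf_eq_prime_pow (p := 2) (n := 2)
      (by rw [show 2 ^ 2 = 4 from rfl, h4R]; exact Point.some_ne_zero hP)
      (by rw [show 2 ^ (2 + 1) = 4 * 2 from rfl, mul_nsmul, h4R,
        cubicCurve_two_nsmul_some_of_Y_eq_zero])
  refine ⟨hR, horder, exists_zmod_prod_zmod_two_injective (n := 4) horder
    (cubicCurve_two_nsmul_some_of_Y_eq_zero hT) (Point.some_ne_zero hT) ?_⟩
  rw [h4R, Ne, Point.some.injEq]
  exact fun h => one_ne_zero (neg_eq_zero.1 h.1)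
end
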